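/- (Asymptotic limit of the one-shot work quantities: convergence to the free-energy difference) Fix an inverse temperature β > 0, a strictly positive probability vector g on Fin d, a probability vector r on Fin d, and ε ∈ (0,1). For each n, consider the system of n copies, with state r^{⊗n} and equilibrium state g^{⊗n} on (Fin d)^n. Then lim_{n→∞} (1/n) · W_gain^ε(r^{⊗n}) = lim_{n→∞} (1/n) · W_cost^ε(r^{⊗n}) = (1/β) · D(r ‖ g). -/

import Mathlib

/-!
Both one-shot quantities are pinned down, up to the additive constant `-log ((1 - ε) / 2)`, by
hypothesis testing between `p` and the equilibrium state `h`. An extraction protocol for `W` yields a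
test accepting `p` with probability at least `1 - ε` and `h` with probability at most `e^{-βW}`;
conversely the indicator of any event `T` with `p(T) ≥ 1 - ε` can be turned into a protocol
extracting `-log h(T) / β`. A formation protocol at cost `W` produces an `ε`-approximation `p̃` of
`p` with `p̃ ≤ e^{βW} h`; conversely `p` conditioned on `T` can be formed at cost
`(log max (p/h on T) - log p(T)) / β`.

For `p = r^{⊗n}`, `h = g^{⊗n}` take `T` to be the set of sequences whose log-likelihood ratio, a sum
of `n` i.i.d. terms with mean `D(r‖g)`, is within `nδ` of `n D(r‖g)`. Chebyshev's inequality gives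
`r^{⊗n}(T) → 1`, and on `T` the ratio `r^{⊗n} / g^{⊗n}` lies between `e^{n(D-δ)}` and `e^{n(D+δ)}`.
Hence `β W = n D(r‖g) + O(nδ) + O(1)` for both quantities.
-/

open Finset Real Filter

/-- A probability vector on a finite index set. -/
def IsProbVec {ι : Type*} [Fintype ι] (r : ι → ℝ) : Prop :=
  (∀ i, 0 ≤ r i) ∧ ∑ i, r i = 1

/-- A column-stochastic matrix: nonnegative entries, each column sums to 1. -/
def ColStochastic {ι κ : Type*} [Fintype ι] [Fintype κ] (M : Matrix κ ι ℝ) : Prop :=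
  (∀ i j, 0 ≤ M i j) ∧ ∀ j, ∑ i, M i j = 1

/-- Tensor product of vectors. -/
def tens {ι κ : Type*} (r : ι → ℝ) (s : κ → ℝ) : ι × κ → ℝ := fun p => r p.1 * s p.2

/-- n-fold tensor power of a vector on `Fin d`. -/
def tensPow {d : ℕ} (r : Fin d → ℝ) (n : ℕ) : (Fin n → Fin d) → ℝ :=
  fun f => ∏ k, r (f k)

/-- Relative entropy `D(r ‖ g)` (natural logarithm; `0 * log 0 = 0` holds by convention). -/
noncomputable def relEnt {ι : Type*} [Fintype ι] (r g : ι → ℝ) : ℝ :=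
  ∑ i, r i * (Real.log (r i) - Real.log (g i))

/-- Optimal type-II error in hypothesis testing between `r` and `g`. -/
noncomputable def bEps {ι : Type*} [Fintype ι] (ε : ℝ) (r g : ι → ℝ) : ℝ :=
  sInf {y | ∃ Q : ι → ℝ, (∀ i, 0 ≤ Q i ∧ Q i ≤ 1) ∧ 1 - ε ≤ ∑ i, Q i * r i ∧
    y = ∑ i, Q i * g i}

/-- Hypothesis-testing relative entropy. -/
noncomputable def DH {ι : Type*} [Fintype ι] (ε : ℝ) (r g : ι → ℝ) : ℝ :=
  - Real.log (bEps ε r g)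

/-- Partial sums of `v` along the ordering `e`. -/
noncomputable def cumul {ι : Type*} [Fintype ι] (v : ι → ℝ)
    (e : Fin (Fintype.card ι) ≃ ι) (m : ℕ) : ℝ :=
  ∑ α ∈ Finset.univ.filter (fun α : Fin (Fintype.card ι) => (α : ℕ) < m), v (e α)

/-- `L` is the rescaled Lorenz curve of `r` relative to `g`: indices are ordered so that the
ratios `r/g` are nonincreasing, and `L` linearly interpolates the cumulative points. -/
def IsLorenzCurveOf {ι : Type*} [Fintype ι] (r g : ι → ℝ) (L : ℝ → ℝ) : Prop :=
  ∃ e : Fin (Fintype.card ι) ≃ ι,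
    (∀ a b : Fin (Fintype.card ι), a ≤ b → r (e b) / g (e b) ≤ r (e a) / g (e a)) ∧
    ∀ m : Fin (Fintype.card ι), ∀ x : ℝ,
      cumul g e (m : ℕ) ≤ x → x ≤ cumul g e ((m : ℕ) + 1) →
      L x = cumul r e (m : ℕ) + (x - cumul g e (m : ℕ)) * (r (e m) / g (e m))

/-- Gibbs state of a two-level battery with gap `W` at inverse temperature `β`. -/
noncomputable def gibbsBit (β W : ℝ) : Fin 2 → ℝ :=
  fun k => (1 / (1 + Real.exp (-β * W))) * (if k = 0 then 1 else Real.exp (-β * W))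

/-- Battery ground state `(1,0)`. -/
def groundBit : Fin 2 → ℝ := fun k => if k = 0 then 1 else 0

/-- Battery excited state `(0,1)`. -/
def excitedBit : Fin 2 → ℝ := fun k => if k = 0 then 0 else 1

/-- `W` units of work are ε-extractable from `r` relative to the equilibrium state `g`. -/
def ExtractableWork {ι : Type*} [Fintype ι] (β : ℝ) (g r : ι → ℝ) (ε W : ℝ) : Prop :=
  0 ≤ W ∧ ∃ M : Matrix (ι × Fin 2) (ι × Fin 2) ℝ, ColStochastic M ∧
    M.mulVec (tens g (gibbsBit β W)) = tens g (gibbsBit β W) ∧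
    (1/2) * ∑ k, |(∑ i, M.mulVec (tens r groundBit) (i, k)) - excitedBit k| ≤ ε

/-- One-shot ε-work yield. -/
noncomputable def Wgain {ι : Type*} [Fintype ι] (β : ℝ) (g r : ι → ℝ) (ε : ℝ) : ℝ :=
  sSup {W | ExtractableWork β g r ε W}

/-- `W` units of work ε-suffice to create `r` relative to the equilibrium state `g`. -/
def FormationWork {ι : Type*} [Fintype ι] (β : ℝ) (g r : ι → ℝ) (ε W : ℝ) : Prop :=
  0 ≤ W ∧ ∃ M : Matrix (ι × Fin 2) (ι × Fin 2) ℝ, ∃ rt : ι → ℝ, ColStochastic M ∧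
    M.mulVec (tens g (gibbsBit β W)) = tens g (gibbsBit β W) ∧
    IsProbVec rt ∧ (1/2) * ∑ i, |rt i - r i| ≤ ε ∧
    M.mulVec (tens g excitedBit) = tens rt groundBit

/-- One-shot ε-work cost. -/
noncomputable def Wcost {ι : Type*} [Fintype ι] (β : ℝ) (g r : ι → ℝ) (ε : ℝ) : ℝ :=
  sInf {W | FormationWork β g r ε W}


open Topology

section OneShot

variable {ι : Type*} [Fintype ι]

lemma IsProbVec.sum_le_one {p : ι → ℝ} (hp : IsProbVec p) (s : Finset ι) : ∑ i ∈ s, p i ≤ 1 :=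
  hp.2 ▸ Finset.sum_le_sum_of_subset_of_nonneg (Finset.subset_univ s) fun i _ _ => hp.1 i

lemma IsProbVec.sum_compl [DecidableEq ι] {p : ι → ℝ} (hp : IsProbVec p) (s : Finset ι) :
    ∑ i ∈ sᶜ, p i = 1 - ∑ i ∈ s, p i := by
  rw [← hp.2, ← Finset.sum_add_sum_compl s]; ring

lemma IsProbVec.sum_mul_le_one {p Q : ι → ℝ} (hp : IsProbVec p) (hQ : ∀ i, 0 ≤ Q i ∧ Q i ≤ 1) :
    ∑ i, Q i * p i ≤ 1 :=
  hp.2 ▸ Finset.sum_le_sum fun i _ => mul_le_of_le_one_left (hp.1 i) (hQ i).2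

lemma mulVec_tens_apply (M : Matrix (ι × Fin 2) (ι × Fin 2) ℝ) (v : ι → ℝ) (w : Fin 2 → ℝ)
    (j : ι) (l : Fin 2) :
    M.mulVec (tens v w) (j, l) = ∑ i, (M (j, l) (i, 0) * w 0 + M (j, l) (i, 1) * w 1) * v i := by
  simp only [Matrix.mulVec, dotProduct, Fintype.sum_prod_type, Fin.sum_univ_two, tens]
  exact Finset.sum_congr rfl fun i _ => by ring

lemma sum_fin_two_abs_sub_excitedBit (b : Fin 2 → ℝ) :
    ∑ k, |b k - excitedBit k| = |b 0| + |b 1 - 1| := by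
  simp [Fin.sum_univ_two, excitedBit]

lemma gibbsBit_zero_pos (β W : ℝ) : 0 < gibbsBit β W 0 := by
  simp only [gibbsBit, if_true]; positivity

lemma gibbsBit_one (β W : ℝ) : gibbsBit β W 1 = Real.exp (-β * W) * gibbsBit β W 0 := by
  simp [gibbsBit, mul_comm]

lemma gibbsBit_one_nonneg (β W : ℝ) : 0 ≤ gibbsBit β W 1 := by
  rw [gibbsBit_one]; exact mul_nonneg (Real.exp_pos _).le (gibbsBit_zero_pos β W).le

lemma ColStochastic.sum_fin_two {M : Matrix (ι × Fin 2) (ι × Fin 2) ℝ} (hM : ColStochastic M)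
    (i : ι) (k : Fin 2) : ∑ j, (M (j, 0) (i, k) + M (j, 1) (i, k)) = 1 := by
  simpa only [Fintype.sum_prod_type, Fin.sum_univ_two] using hM.2 (i, k)

lemma ExtractableWork.exists_test {β ε W : ℝ} {h p : ι → ℝ} (hh : IsProbVec h)
    (hp : IsProbVec p) (hE : ExtractableWork β h p ε W) :
    ∃ Q : ι → ℝ, (∀ i, 0 ≤ Q i ∧ Q i ≤ 1) ∧ 1 - ε ≤ ∑ i, Q i * p i ∧
      ∑ i, Q i * h i ≤ Real.exp (-β * W) := by
  obtain ⟨-, M, hM, hfix, hbat⟩ := hE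
  set γ := gibbsBit β W
  -- `Q i` is the probability that the battery ends up excited when started in `(i, ground)`.
  set Q : ι → ℝ := fun i => ∑ j, M (j, 1) (i, 0)
  have hQ : ∀ i, 0 ≤ Q i ∧ Q i ≤ 1 := fun i =>
    ⟨Finset.sum_nonneg fun j _ => hM.1 _ _, hM.sum_fin_two i 0 ▸
      Finset.sum_le_sum fun j _ => le_add_of_nonneg_left (hM.1 _ _)⟩
  have hmarg : ∀ l,
      ∑ j, M.mulVec (tens p groundBit) (j, l) = ∑ i, (∑ j, M (j, l) (i, 0)) * p i := by
    intro l
    simp only [mulVec_tens_apply, groundBit, Finset.sum_mul]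
    rw [Finset.sum_comm]
    simp
  have hsum : ∑ i, (∑ j, M (j, 0) (i, 0)) * p i + ∑ i, Q i * p i = 1 := by
    rw [← hp.2, ← Finset.sum_add_distrib]
    refine Finset.sum_congr rfl fun i _ => ?_
    rw [← add_mul, ← Finset.sum_add_distrib, hM.sum_fin_two i 0, one_mul]
  have hsucc : 1 - ε ≤ ∑ i, Q i * p i := by
    rw [sum_fin_two_abs_sub_excitedBit, hmarg, hmarg] at hbat
    have := le_abs_self (∑ i, (∑ j, M (j, 0) (i, 0)) * p i)
    have := neg_abs_le (∑ i, Q i * p i - 1)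
    linarith
  have hval : (∑ i, Q i * h i) * γ 0 ≤ γ 1 := by
    have hfix1 : ∑ j, M.mulVec (tens h γ) (j, 1) = γ 1 := by
      simp only [hfix, tens, ← Finset.sum_mul, hh.2, one_mul]
    calc (∑ i, Q i * h i) * γ 0 = ∑ j, ∑ i, M (j, 1) (i, 0) * γ 0 * h i := by
          simp only [Q, Finset.sum_mul]
          rw [Finset.sum_comm]
          exact Finset.sum_congr rfl fun j _ => Finset.sum_congr rfl fun i _ => by ring
      _ ≤ ∑ j, M.mulVec (tens h γ) (j, 1) := by
          simp only [mulVec_tens_apply, add_mul]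
          gcongr with j _ i _
          exact le_add_of_nonneg_right <|
            mul_nonneg (mul_nonneg (hM.1 _ _) (gibbsBit_one_nonneg β W)) (hh.1 i)
      _ = γ 1 := hfix1
  refine ⟨Q, hQ, hsucc, ?_⟩
  rw [show γ 1 = _ from gibbsBit_one β W] at hval
  exact le_of_mul_le_mul_right hval (gibbsBit_zero_pos β W)

/-- The protocol achieving a test `Q` with `μ = ∑ i, Q i * h i`: from the ground state, the test
accepts `i` with probability `Q i`, in which case the system is rethermalised to `h` and the battery
excited; the excited state is mapped back onto the ground state with system state `h Q / μ`, which
is what keeps `h ⊗ γ` fixed once `γ 1 = μ γ 0`. -/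
noncomputable def extractionMap [DecidableEq ι] (h Q : ι → ℝ) (μ : ℝ) :
    Matrix (ι × Fin 2) (ι × Fin 2) ℝ :=
  fun jl ik =>
    if ik.2 = 0 then
      if jl.2 = 0 then (if jl.1 = ik.1 then 1 - Q ik.1 else 0) else Q ik.1 * h jl.1
    else if jl.2 = 0 then Q jl.1 * h jl.1 / μ else 0

section extractionMap

variable [DecidableEq ι] {h Q : ι → ℝ} {μ : ℝ}

lemma extractionMap_colStochastic (hh : IsProbVec h) (hQ : ∀ i, 0 ≤ Q i ∧ Q i ≤ 1)
    (hμ : ∑ i, Q i * h i = μ) (hμpos : 0 < μ) : ColStochastic (extractionMap h Q μ) := by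
  refine ⟨fun ⟨j, l⟩ ⟨i, k⟩ => ?_, fun ⟨i, k⟩ => ?_⟩
  · have := hQ i; have := hQ j
    fin_cases k <;> fin_cases l <;> simp only [extractionMap] <;> split_ifs <;> norm_num <;>
      first
        | linarith
        | exact mul_nonneg (hQ i).1 (hh.1 j)
        | exact div_nonneg (mul_nonneg (hQ j).1 (hh.1 j)) hμpos.le
  · rw [Fintype.sum_prod_type]
    fin_cases k
    · simp [extractionMap, Fin.sum_univ_two, Finset.sum_add_distrib, ← Finset.mul_sum, hh.2]
    · simp only [extractionMap, Fin.sum_univ_two]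
      simp [← Finset.sum_div, hμ, hμpos.ne']

lemma extractionMap_mulVec_tens (hh : IsProbVec h) (hμ : ∑ i, Q i * h i = μ) (hμpos : 0 < μ)
    {γ : Fin 2 → ℝ} (hγ : γ 1 = μ * γ 0) :
    (extractionMap h Q μ).mulVec (tens h γ) = tens h γ := by
  funext ⟨j, l⟩
  rw [mulVec_tens_apply]
  fin_cases l
  · simp [extractionMap, tens, add_mul, Finset.sum_add_distrib, ← Finset.mul_sum, hh.2, hγ]
    field_simp
    ring
  · simp [extractionMap, tens]
    rw [hγ, ← hμ, Finset.sum_mul, Finset.mul_sum]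
    exact Finset.sum_congr rfl fun i _ => by ring

lemma extractionMap_battery {p : ι → ℝ} (hh : IsProbVec h) (hp : IsProbVec p) :
    ∑ j, (extractionMap h Q μ).mulVec (tens p groundBit) (j, 0) = 1 - ∑ i, Q i * p i ∧
      ∑ j, (extractionMap h Q μ).mulVec (tens p groundBit) (j, 1) = ∑ i, Q i * p i := by
  simp only [mulVec_tens_apply, extractionMap, groundBit]
  simp [Finset.sum_comm (γ := ι), ← Finset.sum_mul, ← Finset.mul_sum, hh.2, sub_mul,
    Finset.sum_sub_distrib, hp.2]

end extractionMap

lemma extractableWork_of_test {β ε : ℝ} (hβ : 0 < β) {h p Q : ι → ℝ} (hh : IsProbVec h)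
    (hp : IsProbVec p) (hQ : ∀ i, 0 ≤ Q i ∧ Q i ≤ 1) (hQp : 1 - ε ≤ ∑ i, Q i * p i)
    (hQh : 0 < ∑ i, Q i * h i) : ExtractableWork β h p ε (-Real.log (∑ i, Q i * h i) / β) := by
  classical
  set μ := ∑ i, Q i * h i with hμ
  have hexp : Real.exp (-β * (-Real.log μ / β)) = μ := by
    rw [show -β * (-Real.log μ / β) = Real.log μ by field_simp, Real.exp_log hQh]
  refine ⟨div_nonneg (neg_nonneg.2 (Real.log_nonpos hQh.le (hh.sum_mul_le_one hQ))) hβ.le,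
    extractionMap h Q μ, extractionMap_colStochastic hh hQ hμ.symm hQh,
    extractionMap_mulVec_tens hh hμ.symm hQh (by rw [gibbsBit_one, hexp]), ?_⟩
  obtain ⟨h0, h1⟩ := extractionMap_battery (μ := μ) hh hp (Q := Q)
  rw [sum_fin_two_abs_sub_excitedBit, h0, h1, abs_sub_comm,
    abs_of_nonpos (sub_nonpos.2 (hp.sum_mul_le_one hQ))]
  linarith

lemma FormationWork.exists_le_exp_mul {β ε W : ℝ} {h p : ι → ℝ} (hh : ∀ i, 0 ≤ h i)
    (hF : FormationWork β h p ε W) :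
    ∃ q : ι → ℝ, IsProbVec q ∧ (1 / 2) * ∑ i, |q i - p i| ≤ ε ∧
      ∀ i, q i ≤ Real.exp (β * W) * h i := by
  obtain ⟨-, M, q, hM, hfix, hq, hclose, hcreate⟩ := hF
  refine ⟨q, hq, hclose, fun i => ?_⟩
  set γ := gibbsBit β W
  have hqi : q i = ∑ j, M (i, 0) (j, 1) * h j := by
    simpa [tens, groundBit, excitedBit, mulVec_tens_apply] using (congrFun hcreate (i, 0)).symm
  have hle : Real.exp (-β * W) * q i * γ 0 ≤ h i * γ 0 := by
    have hfixi : ∑ j, (M (i, 0) (j, 0) * γ 0 + M (i, 0) (j, 1) * γ 1) * h j = h i * γ 0 := by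
      simpa [tens, mulVec_tens_apply] using congrFun hfix (i, 0)
    rw [← hfixi, hqi, Finset.mul_sum, Finset.sum_mul]
    refine Finset.sum_le_sum fun j _ => ?_
    rw [show γ 1 = _ from gibbsBit_one β W]
    nlinarith [mul_nonneg (mul_nonneg (hM.1 (i, 0) (j, 0)) (gibbsBit_zero_pos β W).le) (hh j)]
  calc q i = Real.exp (β * W) * (Real.exp (-β * W) * q i) := by
        rw [← mul_assoc, ← Real.exp_add, neg_mul, add_neg_cancel, Real.exp_zero, one_mul]
    _ ≤ Real.exp (β * W) * h i :=
        mul_le_mul_of_nonneg_left (le_of_mul_le_mul_right hle (gibbsBit_zero_pos β W))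
          (Real.exp_pos _).le

/-- The protocol forming `q` at cost `W`, with `E = exp (-β W)`. Its output does not depend on the
input system: an excited battery yields `q ⊗ ground`, a battery in the ground state yields
`(h - E q) ⊗ ground + E h ⊗ excited`. -/
noncomputable def formationMap (h q : ι → ℝ) (E : ℝ) : Matrix (ι × Fin 2) (ι × Fin 2) ℝ :=
  fun ik jl =>
    if jl.2 = 0 then (if ik.2 = 0 then h ik.1 - E * q ik.1 else E * h ik.1)
    else if ik.2 = 0 then q ik.1 else 0

lemma formationWork_of_le_exp_mul {β ε W : ℝ} {h p q : ι → ℝ} (hh : IsProbVec h) (hW : 0 ≤ W)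
    (hq : IsProbVec q) (hclose : (1 / 2) * ∑ i, |q i - p i| ≤ ε)
    (hle : ∀ i, q i ≤ Real.exp (β * W) * h i) : FormationWork β h p ε W := by
  obtain ⟨E, hE⟩ : ∃ E, Real.exp (-β * W) = E := ⟨_, rfl⟩
  have hE0 : 0 ≤ E := hE ▸ (Real.exp_pos _).le
  have hEq : ∀ i, E * q i ≤ h i := fun i => by
    have := mul_le_mul_of_nonneg_left (hle i) (Real.exp_pos (-β * W)).le
    rwa [← mul_assoc, ← Real.exp_add, neg_mul, neg_add_cancel, Real.exp_zero, one_mul,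
      ← neg_mul, hE] at this
  have hγ : gibbsBit β W 1 = E * gibbsBit β W 0 := hE ▸ gibbsBit_one β W
  refine ⟨hW, formationMap h q E, q, ⟨fun ⟨i, k⟩ ⟨j, l⟩ => ?_, fun ⟨j, l⟩ => ?_⟩, ?_, hq, hclose,
    ?_⟩
  · fin_cases k <;> fin_cases l <;> simp [formationMap, hq.1 i, hEq i, mul_nonneg hE0 (hh.1 i)]
  · rw [Fintype.sum_prod_type]
    fin_cases l <;> simp [formationMap, Finset.sum_add_distrib, Finset.sum_sub_distrib,
      ← Finset.mul_sum, hh.2, hq.2]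
  · funext ⟨i, k⟩
    rw [mulVec_tens_apply]
    fin_cases k <;> simp [formationMap, tens, ← Finset.mul_sum, hh.2, hγ] <;> ring
  · funext ⟨i, k⟩
    rw [mulVec_tens_apply]
    fin_cases k <;> simp [formationMap, tens, excitedBit, groundBit, ← Finset.mul_sum, hh.2]

end OneShot

lemma sum_mem_Icc_of_forall_mem_Icc {ι : Type*} {h p : ι → ℝ} {T : Finset ι} {a b : ℝ}
    (hratio : ∀ x ∈ T, p x ∈ Set.Icc (Real.exp a * h x) (Real.exp b * h x)) :
    ∑ x ∈ T, p x ∈ Set.Icc (Real.exp a * ∑ x ∈ T, h x) (Real.exp b * ∑ x ∈ T, h x) := by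
  rw [Finset.mul_sum, Finset.mul_sum]
  exact ⟨Finset.sum_le_sum fun x hx => (hratio x hx).1,
    Finset.sum_le_sum fun x hx => (hratio x hx).2⟩

section OneShotBounds

variable {ι : Type*} [Fintype ι] {h p : ι → ℝ} {T : Finset ι} {a b β ε : ℝ}

lemma sum_sub_le_half_sum_abs_sub {u v : ι → ℝ} (huv : ∑ i, u i = ∑ i, v i) (A : Finset ι) :
    ∑ i ∈ A, (u i - v i) ≤ (1 / 2) * ∑ i, |u i - v i| := by
  classical
  have hA : ∑ i ∈ A, (u i - v i) = -∑ i ∈ Aᶜ, (u i - v i) := by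
    rw [eq_neg_iff_add_eq_zero, Finset.sum_add_sum_compl, Finset.sum_sub_distrib, huv, sub_self]
  have h₁ := Finset.sum_le_sum fun i (_ : i ∈ A) => le_abs_self (u i - v i)
  have h₂ := Finset.sum_le_sum fun i (_ : i ∈ Aᶜ) => neg_le_abs (u i - v i)
  rw [Finset.sum_neg_distrib] at h₂
  rw [← Finset.sum_add_sum_compl A]
  linarith

lemma ExtractableWork.mul_le (hh : IsProbVec h) (hp : IsProbVec p) (hε : ε < 1)
    (hratio : ∀ x ∈ T, p x ≤ Real.exp b * h x) (hT : (1 + ε) / 2 ≤ ∑ x ∈ T, p x) {W : ℝ}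
    (hW : ExtractableWork β h p ε W) : β * W ≤ b - Real.log ((1 - ε) / 2) := by
  classical
  obtain ⟨Q, hQ, hQp, hQh⟩ := hW.exists_test hh hp
  have hQT : (1 - ε) / 2 ≤ ∑ x ∈ T, Q x * p x := by
    have hcompl : ∑ x ∈ Tᶜ, Q x * p x ≤ 1 - ∑ x ∈ T, p x := by
      rw [← hp.sum_compl]
      exact Finset.sum_le_sum fun x _ => mul_le_of_le_one_left (hp.1 x) (hQ x).2
    linarith [Finset.sum_add_sum_compl T fun x => Q x * p x]
  have hQhT : ∑ x ∈ T, Q x * p x ≤ Real.exp b * ∑ x, Q x * h x := by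
    rw [Finset.mul_sum]
    refine (Finset.sum_le_sum fun x hx => ?_).trans
      (Finset.sum_le_sum_of_subset_of_nonneg T.subset_univ fun x _ _ => ?_)
    · nlinarith [(hQ x).1, hratio x hx]
    · exact mul_nonneg (Real.exp_pos b).le (mul_nonneg (hQ x).1 (hh.1 x))
  have : Real.exp (Real.log ((1 - ε) / 2) - b) ≤ Real.exp (-β * W) := by
    rw [Real.exp_sub, Real.exp_log (by linarith), div_le_iff₀ (Real.exp_pos b)]
    nlinarith [Real.exp_pos b]
  linarith [Real.exp_le_exp.1 this]

lemma mul_Wgain_mem_Icc (hβ : 0 < β) (hh : IsProbVec h) (hp : IsProbVec p) (hε : ε < 1)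
    (hratio : ∀ x ∈ T, p x ∈ Set.Icc (Real.exp a * h x) (Real.exp b * h x))
    (hT : 1 - ε ≤ ∑ x ∈ T, p x) (hT' : (1 + ε) / 2 ≤ ∑ x ∈ T, p x) :
    β * Wgain β h p ε ∈ Set.Icc a (b - Real.log ((1 - ε) / 2)) := by
  classical
  obtain ⟨hpa, hpb⟩ := sum_mem_Icc_of_forall_mem_Icc hratio
  have hhT : 0 < ∑ x ∈ T, h x :=
    pos_of_mul_pos_right ((by linarith : (0 : ℝ) < 1 - ε).trans_le (hT.trans hpb))
      (Real.exp_pos b).le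
  have hext : ExtractableWork β h p ε (-Real.log (∑ x ∈ T, h x) / β) := by
    simpa [ite_mul, Fintype.sum_ite_mem] using
      extractableWork_of_test (Q := fun x => if x ∈ T then 1 else 0) hβ hh hp
        (fun x => by split_ifs <;> norm_num) (by simpa [ite_mul, Fintype.sum_ite_mem] using hT)
        (by simpa [ite_mul, Fintype.sum_ite_mem] using hhT)
  have hup : ∀ W ∈ {W | ExtractableWork β h p ε W}, W ≤ (b - Real.log ((1 - ε) / 2)) / β :=
    fun W hW => (le_div_iff₀' hβ).2 (hW.mul_le hh hp hε (fun x hx => (hratio x hx).2) hT')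
  refine ⟨?_, (le_div_iff₀' hβ).1 (csSup_le ⟨_, hext⟩ hup)⟩
  have hlog : a ≤ -Real.log (∑ x ∈ T, h x) := by
    have := Real.log_le_log (mul_pos (Real.exp_pos a) hhT) (hpa.trans (hp.sum_le_one T))
    rw [Real.log_mul (Real.exp_pos a).ne' hhT.ne', Real.log_exp, Real.log_one] at this
    linarith
  exact hlog.trans ((div_le_iff₀' hβ).1 (le_csSup ⟨_, hup⟩ hext))

lemma FormationWork.le_mul (hh : IsProbVec h) (hp : IsProbVec p) (hε : ε < 1)
    (hratio : ∀ x ∈ T, Real.exp a * h x ≤ p x) (hT : (1 + ε) / 2 ≤ ∑ x ∈ T, p x) {W : ℝ}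
    (hW : FormationWork β h p ε W) : a + Real.log ((1 - ε) / 2) ≤ β * W := by
  obtain ⟨q, hq, hclose, hle⟩ := hW.exists_le_exp_mul hh.1
  have hqT : (1 - ε) / 2 ≤ ∑ x ∈ T, q x := by
    have := sum_sub_le_half_sum_abs_sub (hp.2.trans hq.2.symm) T
    simp only [Finset.sum_sub_distrib, abs_sub_comm (p _)] at this
    linarith
  have hhT : Real.exp a * ∑ x ∈ T, h x ≤ 1 := by
    rw [Finset.mul_sum]
    exact (Finset.sum_le_sum hratio).trans (hp.sum_le_one T)
  have : Real.exp (a + Real.log ((1 - ε) / 2)) ≤ Real.exp (β * W) := by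
    rw [Real.exp_add, Real.exp_log (by linarith)]
    calc Real.exp a * ((1 - ε) / 2) ≤ Real.exp a * ∑ x ∈ T, Real.exp (β * W) * h x :=
          mul_le_mul_of_nonneg_left (hqT.trans (Finset.sum_le_sum fun x _ => hle x))
            (Real.exp_pos a).le
      _ = Real.exp (β * W) * (Real.exp a * ∑ x ∈ T, h x) := by rw [← Finset.mul_sum]; ring
      _ ≤ Real.exp (β * W) := mul_le_of_le_one_right (Real.exp_pos _).le hhT
  exact Real.exp_le_exp.1 this

noncomputable def condVec [DecidableEq ι] (p : ι → ℝ) (T : Finset ι) : ι → ℝ :=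
  fun x => if x ∈ T then p x / ∑ y ∈ T, p y else 0

lemma isProbVec_condVec [DecidableEq ι] (hp : IsProbVec p) (hT : 0 < ∑ x ∈ T, p x) :
    IsProbVec (condVec p T) := by
  refine ⟨fun x => ?_, ?_⟩
  · unfold condVec; split_ifs
    exacts [div_nonneg (hp.1 x) hT.le, le_rfl]
  · simp [condVec, ← Finset.sum_div, hT.ne']

lemma half_sum_abs_condVec_sub [DecidableEq ι] (hp : IsProbVec p)
    (hT : 0 < ∑ x ∈ T, p x) :
    (1 / 2) * ∑ x, |condVec p T x - p x| = 1 - ∑ x ∈ T, p x := by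
  have hin : ∀ x ∈ T, |condVec p T x - p x| = p x / ∑ y ∈ T, p y - p x := fun x hx => by
    rw [condVec, if_pos hx,
      abs_of_nonneg (sub_nonneg.2 (le_div_self (hp.1 x) hT (hp.sum_le_one T)))]
  have hout : ∀ x ∈ Tᶜ, |condVec p T x - p x| = p x := fun x hx => by
    rw [condVec, if_neg (Finset.mem_compl.1 hx), zero_sub, abs_neg, abs_of_nonneg (hp.1 x)]
  rw [← Finset.sum_add_sum_compl T, Finset.sum_congr rfl hin, Finset.sum_congr rfl hout,
    hp.sum_compl, Finset.sum_sub_distrib, ← Finset.sum_div, div_self hT.ne']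
  ring

lemma mul_Wcost_mem_Icc (hβ : 0 < β) (hh : IsProbVec h) (hp : IsProbVec p) (hε : ε < 1)
    (hratio : ∀ x ∈ T, p x ∈ Set.Icc (Real.exp a * h x) (Real.exp b * h x))
    (hT : 1 - ε ≤ ∑ x ∈ T, p x) (hT' : (1 + ε) / 2 ≤ ∑ x ∈ T, p x) :
    β * Wcost β h p ε ∈
      Set.Icc (a + Real.log ((1 - ε) / 2)) (b - Real.log ((1 - ε) / 2)) := by
  classical
  set S := ∑ x ∈ T, p x
  have hS : 0 < S := by linarith
  have hSb : Real.log S ≤ b := (Real.log_le_iff_le_exp hS).2 <|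
    (sum_mem_Icc_of_forall_mem_Icc hratio).2.trans
      (mul_le_of_le_one_right (Real.exp_pos b).le (hh.sum_le_one T))
  have hform : FormationWork β h p ε ((b - Real.log S) / β) := by
    refine formationWork_of_le_exp_mul hh (div_nonneg (sub_nonneg.2 hSb) hβ.le)
      (isProbVec_condVec hp hS) (by rw [half_sum_abs_condVec_sub hp hS]; linarith) fun x => ?_
    rw [mul_div_cancel₀ _ hβ.ne', Real.exp_sub, Real.exp_log hS, div_mul_eq_mul_div, condVec]
    split_ifs with hx
    · exact div_le_div_of_nonneg_right (hratio x hx).2 hS.le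
    · exact div_nonneg (mul_nonneg (Real.exp_pos b).le (hh.1 x)) hS.le
  have hlow : ∀ W ∈ {W | FormationWork β h p ε W}, (a + Real.log ((1 - ε) / 2)) / β ≤ W :=
    fun W hW => (div_le_iff₀' hβ).2 (hW.le_mul hh hp hε (fun x hx => (hratio x hx).1) hT')
  refine ⟨(div_le_iff₀' hβ).1 (le_csInf ⟨_, hform⟩ hlow), ?_⟩
  calc β * Wcost β h p ε ≤ β * ((b - Real.log S) / β) :=
        mul_le_mul_of_nonneg_left (csInf_le ⟨0, fun W hW => hW.1⟩ hform) hβ.le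
    _ = b - Real.log S := mul_div_cancel₀ _ hβ.ne'
    _ ≤ b - Real.log ((1 - ε) / 2) := by
        linarith [Real.log_le_log (by linarith : (0 : ℝ) < (1 - ε) / 2)
          (by linarith : (1 - ε) / 2 ≤ S)]

end OneShotBounds

section TensorPower

variable {d : ℕ} {r g : Fin d → ℝ}

lemma sum_tensPow_mul_prod (r : Fin d → ℝ) (n : ℕ) (u : Fin n → Fin d → ℝ) :
    ∑ x, tensPow r n x * ∏ k, u k (x k) = ∏ k, ∑ i, r i * u k i := by
  simp only [tensPow, ← Finset.prod_mul_distrib]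
  rw [Finset.prod_univ_sum, Fintype.piFinset_univ]

lemma isProbVec_tensPow (hr : IsProbVec r) (n : ℕ) : IsProbVec (tensPow r n) :=
  ⟨fun x => Finset.prod_nonneg fun k _ => hr.1 (x k), by
    simpa [hr.2] using sum_tensPow_mul_prod r n fun _ _ => 1⟩

lemma sum_tensPow_mul_sum_sq (hr : IsProbVec r) {f : Fin d → ℝ} (hf : ∑ i, r i * f i = 0)
    (n : ℕ) : ∑ x, tensPow r n x * (∑ k, f (x k)) ^ 2 = n * ∑ i, r i * f i ^ 2 := by
  have hcov : ∀ k l : Fin n, ∑ x, tensPow r n x * (f (x k) * f (x l)) =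
      if k = l then ∑ i, r i * f i ^ 2 else 0 := by
    intro k l
    have := sum_tensPow_mul_prod r n fun j i =>
      (if j = k then f i else 1) * (if j = l then f i else 1)
    simp only [Finset.prod_mul_distrib, Finset.prod_ite_eq', Finset.mem_univ, if_true] at this
    rw [this]
    split_ifs with hkl
    · subst hkl
      rw [Finset.prod_eq_single k (fun j _ hj => by simp [hj, hr.2]) (by simp)]
      simp [sq]
    · exact Finset.prod_eq_zero (Finset.mem_univ k) (by simpa [hkl] using hf)
  calc ∑ x, tensPow r n x * (∑ k, f (x k)) ^ 2
      = ∑ k, ∑ l, ∑ x, tensPow r n x * (f (x k) * f (x l)) := by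
        simp only [sq, Finset.sum_mul_sum]
        simp only [Finset.mul_sum]
        rw [Finset.sum_comm]
        exact Finset.sum_congr rfl fun k _ => Finset.sum_comm
    _ = n * ∑ i, r i * f i ^ 2 := by simp [hcov]

noncomputable def logRatio (r g : Fin d → ℝ) (i : Fin d) : ℝ := Real.log (r i) - Real.log (g i)

noncomputable def relEntVariance (r g : Fin d → ℝ) : ℝ :=
  ∑ i, r i * (logRatio r g i - relEnt r g) ^ 2

/-- The positivity clause matters: where `r (x k) = 0`, the junk value `log 0 = 0` makes the
log-likelihood ratio meaningless. -/
noncomputable def typicalSet (r g : Fin d → ℝ) (n : ℕ) (δ : ℝ) : Finset (Fin n → Fin d) :=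
  Finset.univ.filter fun x =>
    0 < tensPow r n x ∧ |∑ k, logRatio r g (x k) - n * relEnt r g| ≤ n * δ

lemma tensPow_mem_Icc_of_mem_typicalSet (hr : ∀ i, 0 ≤ r i) (hg : ∀ i, 0 < g i) {n : ℕ} {δ : ℝ}
    {x : Fin n → Fin d} (hx : x ∈ typicalSet r g n δ) :
    tensPow r n x ∈ Set.Icc (Real.exp (n * (relEnt r g - δ)) * tensPow g n x)
      (Real.exp (n * (relEnt r g + δ)) * tensPow g n x) := by
  obtain ⟨hpos, habs⟩ := (Finset.mem_filter.1 hx).2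
  have hrx : ∀ k, 0 < r (x k) := fun k => (hr _).lt_of_ne fun h0 =>
    hpos.ne' (Finset.prod_eq_zero (Finset.mem_univ k) h0.symm)
  have hrepr : tensPow r n x = Real.exp (∑ k, logRatio r g (x k)) * tensPow g n x := by
    rw [Real.exp_sum, tensPow, tensPow, ← Finset.prod_mul_distrib]
    refine Finset.prod_congr rfl fun k _ => ?_
    rw [logRatio, Real.exp_sub, Real.exp_log (hrx k), Real.exp_log (hg _),
      div_mul_cancel₀ _ (hg _).ne']
  have hgx : 0 ≤ tensPow g n x := Finset.prod_nonneg fun k _ => (hg _).le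
  obtain ⟨h₁, h₂⟩ := abs_le.1 habs
  rw [hrepr]
  exact ⟨mul_le_mul_of_nonneg_right (Real.exp_le_exp.2 (by linarith)) hgx,
    mul_le_mul_of_nonneg_right (Real.exp_le_exp.2 (by linarith)) hgx⟩

lemma sum_le_sum_mul_sq_div_sq {ι : Type*} [Fintype ι] {w F : ι → ℝ} (hw : ∀ i, 0 ≤ w i)
    {s : Finset ι} {t : ℝ} (ht : 0 < t) (hs : ∀ i ∈ s, w i = 0 ∨ t ≤ |F i|) :
    ∑ i ∈ s, w i ≤ (∑ i, w i * F i ^ 2) / t ^ 2 := by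
  rw [le_div_iff₀ (pow_pos ht 2), Finset.sum_mul]
  refine (Finset.sum_le_sum fun i hi => ?_).trans
    (Finset.sum_le_sum_of_subset_of_nonneg s.subset_univ fun i _ _ =>
      mul_nonneg (hw i) (sq_nonneg _))
  rcases hs i hi with h0 | hF
  · simp [h0]
  · exact mul_le_mul_of_nonneg_left (sq_abs (F i) ▸ pow_le_pow_left₀ ht.le hF 2) (hw i)

lemma one_sub_div_le_sum_typicalSet (hr : IsProbVec r) {n : ℕ} (hn : 0 < n) {δ : ℝ}
    (hδ : 0 < δ) :
    1 - relEntVariance r g / (n * δ ^ 2) ≤ ∑ x ∈ typicalSet r g n δ, tensPow r n x := by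
  have hrn := isProbVec_tensPow hr n
  have hcentred : ∑ i, r i * (logRatio r g i - relEnt r g) = 0 := by
    simp only [mul_sub, Finset.sum_sub_distrib, ← Finset.sum_mul, hr.2, one_mul]
    exact sub_self _
  have hout := sum_le_sum_mul_sq_div_sq hrn.1 (s := (typicalSet r g n δ)ᶜ) (t := n * δ)
    (F := fun x => ∑ k, (logRatio r g (x k) - relEnt r g)) (by positivity) fun x hx => by
      simp only [typicalSet, Finset.mem_compl, Finset.mem_filter, Finset.mem_univ, true_and,
        not_and, not_le, Finset.sum_sub_distrib, Finset.sum_const, Finset.card_univ,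
        Fintype.card_fin, nsmul_eq_mul] at hx ⊢
      rcases (hrn.1 x).eq_or_lt with h0 | hpos
      exacts [Or.inl h0.symm, Or.inr (hx hpos).le]
  rw [sum_tensPow_mul_sum_sq hr hcentred, hrn.sum_compl, ← relEntVariance] at hout
  have : (n : ℝ) * relEntVariance r g / (n * δ) ^ 2 = relEntVariance r g / (n * δ ^ 2) := by
    field_simp
  linarith

lemma eventually_le_sum_typicalSet (hr : IsProbVec r) {δ : ℝ} (hδ : 0 < δ) {t : ℝ} (ht : t < 1) :
    ∀ᶠ n : ℕ in atTop, t ≤ ∑ x ∈ typicalSet r g n δ, tensPow r n x := by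
  have hlim : Tendsto (fun n : ℕ => 1 - relEntVariance r g / (n * δ ^ 2)) atTop (𝓝 1) := by
    have := (tendsto_const_nhds (x := (1 : ℝ))).sub
      (tendsto_const_div_atTop_nhds_zero_nat (relEntVariance r g / δ ^ 2))
    rw [sub_zero] at this
    exact this.congr fun n => by rw [div_div, mul_comm (δ ^ 2)]
  filter_upwards [hlim.eventually (lt_mem_nhds ht), eventually_gt_atTop 0] with n hn hn0
  exact hn.le.trans (one_sub_div_le_sum_typicalSet hr hn0 hδ)

end TensorPower

lemma tendsto_div_of_abs_sub_le {x : ℕ → ℝ} {L C : ℝ}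
    (h : ∀ δ > 0, ∀ᶠ n : ℕ in atTop, |x n - n * L| ≤ n * δ + C) :
    Tendsto (fun n : ℕ => x n / n) atTop (𝓝 L) := by
  refine Metric.tendsto_nhds.2 fun η hη => ?_
  filter_upwards [h (η / 2) (half_pos hη),
    (tendsto_const_div_atTop_nhds_zero_nat C).eventually (gt_mem_nhds (half_pos hη)),
    eventually_gt_atTop 0] with n hn hC hn0
  have hn0' : (0 : ℝ) < n := Nat.cast_pos.2 hn0
  rw [div_lt_iff₀ hn0'] at hC
  rw [Real.dist_eq, show x n / n - L = (x n - n * L) / n by field_simp, abs_div, Nat.abs_cast,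
    div_lt_iff₀ hn0']
  linarith

section Asymptotics

variable {d : ℕ} {β ε δ : ℝ} {g r : Fin d → ℝ}

lemma eventually_mem_Icc_sum_typicalSet (hr : IsProbVec r) (hε : ε ∈ Set.Ioo (0 : ℝ) 1)
    (hδ : 0 < δ) : ∀ᶠ n : ℕ in atTop,
      1 - ε ≤ ∑ x ∈ typicalSet r g n δ, tensPow r n x ∧
        (1 + ε) / 2 ≤ ∑ x ∈ typicalSet r g n δ, tensPow r n x := by
  filter_upwards [eventually_le_sum_typicalSet hr hδ
    (max_lt (by linarith [hε.1]) (by linarith [hε.2]) : max (1 - ε) ((1 + ε) / 2) < 1)]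
    with n hn
  exact max_le_iff.1 hn

lemma eventually_abs_mul_Wgain_sub_le (hβ : 0 < β) (hg : IsProbVec g) (hgpos : ∀ i, 0 < g i)
    (hr : IsProbVec r) (hε : ε ∈ Set.Ioo (0 : ℝ) 1) (hδ : 0 < δ) : ∀ᶠ n : ℕ in atTop,
      |β * Wgain β (tensPow g n) (tensPow r n) ε - n * relEnt r g| ≤
        n * δ - Real.log ((1 - ε) / 2) := by
  filter_upwards [eventually_mem_Icc_sum_typicalSet hr hε hδ] with n hn
  have := mul_Wgain_mem_Icc hβ (isProbVec_tensPow hg n) (isProbVec_tensPow hr n) hε.2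
    (fun x hx => tensPow_mem_Icc_of_mem_typicalSet hr.1 hgpos hx) hn.1 hn.2
  have hc := Real.log_nonpos (by linarith [hε.2] : (0 : ℝ) ≤ (1 - ε) / 2) (by linarith [hε.1])
  exact abs_sub_le_iff.2 ⟨by linarith [this.2], by linarith [this.1]⟩

lemma eventually_abs_mul_Wcost_sub_le (hβ : 0 < β) (hg : IsProbVec g) (hgpos : ∀ i, 0 < g i)
    (hr : IsProbVec r) (hε : ε ∈ Set.Ioo (0 : ℝ) 1) (hδ : 0 < δ) : ∀ᶠ n : ℕ in atTop,
      |β * Wcost β (tensPow g n) (tensPow r n) ε - n * relEnt r g| ≤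
        n * δ - Real.log ((1 - ε) / 2) := by
  filter_upwards [eventually_mem_Icc_sum_typicalSet hr hε hδ] with n hn
  have := mul_Wcost_mem_Icc hβ (isProbVec_tensPow hg n) (isProbVec_tensPow hr n) hε.2
    (fun x hx => tensPow_mem_Icc_of_mem_typicalSet hr.1 hgpos hx) hn.1 hn.2
  exact abs_sub_le_iff.2 ⟨by linarith [this.2], by linarith [this.1]⟩

end Asymptotics

/-- in the asymptotic limit the one-shot work yield and work cost per copy
both converge to the free-energy difference `(1/β) D(r‖g)`. -/
theorem asymptotic_work_yield_and_cost {d : ℕ} (β : ℝ) (hβ : 0 < β)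
    (g : Fin d → ℝ) (hg : IsProbVec g) (hgpos : ∀ i, 0 < g i)
    (r : Fin d → ℝ) (hr : IsProbVec r)
    (ε : ℝ) (hε : ε ∈ Set.Ioo (0 : ℝ) 1) :
    Tendsto (fun n : ℕ => (1 / (n : ℝ)) * Wgain β (tensPow g n) (tensPow r n) ε) atTop
      (nhds ((1 / β) * relEnt r g)) ∧
    Tendsto (fun n : ℕ => (1 / (n : ℝ)) * Wcost β (tensPow g n) (tensPow r n) ε) atTop
      (nhds ((1 / β) * relEnt r g)) := by
  have hlim : ∀ w : ℕ → ℝ, (∀ δ > 0, ∀ᶠ n : ℕ in atTop,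
      |β * w n - n * relEnt r g| ≤ n * δ - Real.log ((1 - ε) / 2)) →
      Tendsto (fun n : ℕ => (1 / (n : ℝ)) * w n) atTop (𝓝 ((1 / β) * relEnt r g)) :=
    fun w hw => ((tendsto_div_of_abs_sub_le hw).const_mul (1 / β)).congr fun n => by
      field_simp
  exact ⟨hlim _ fun δ hδ => eventually_abs_mul_Wgain_sub_le hβ hg hgpos hr hε hδ,
    hlim _ fun δ hδ => eventually_abs_mul_Wcost_sub_le hβ hg hgpos hr hε hδ⟩
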